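/- Let u₁^± and u_k^± (k ≥ 2) be the transverse eigenfunctions defined by u_k^±(t) = (1/2)cos(kπ(t+1)/4)(1,1)ᵀ ± (1/2)sin(kπ(t+1)/4)(1,−1)ᵀ. Then a_k := ∫_{−1}^{1}⟨σ₃u_k^+(t), u₁^+(t)⟩ dt = (4/π)·sin²(π(k+1)/4)/(k+1) and b_k := ∫_{−1}^{1}⟨σ₃u_k^+(t), u₁^−(t)⟩ dt = (4/π)·sin²(π(k−1)/4)/(k−1). In particular Σ_{k≥2} a_k² < ∞. -/

import Mathlib

open Real MeasureTheory
open scoped ComplexInnerProductSpace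

noncomputable section

abbrev E2 : Type := EuclideanSpace ℂ (Fin 2)

def vec2 (a b : ℂ) : E2 := WithLp.toLp 2 ![a, b]

/-- The Pauli matrix `σ₃ = [[1,0],[0,−1]]` acting on `ℂ²`. -/
def sigma3 (v : E2) : E2 := vec2 (v 0) (-(v 1))

/-- The transverse eigenfunctions `u_k^±`. -/
def ukp (k : ℕ) : ℝ → E2 := fun t =>
  vec2 (((1/2) * (Real.cos ((k : ℝ) * π * (t + 1) / 4) +
            Real.sin ((k : ℝ) * π * (t + 1) / 4)) : ℝ))
       (((1/2) * (Real.cos ((k : ℝ) * π * (t + 1) / 4) -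
            Real.sin ((k : ℝ) * π * (t + 1) / 4)) : ℝ))

def ukm (k : ℕ) : ℝ → E2 := fun t =>
  vec2 (((1/2) * (Real.cos ((k : ℝ) * π * (t + 1) / 4) -
            Real.sin ((k : ℝ) * π * (t + 1) / 4)) : ℝ))
       (((1/2) * (Real.cos ((k : ℝ) * π * (t + 1) / 4) +
            Real.sin ((k : ℝ) * π * (t + 1) / 4)) : ℝ))

/-- `a_k = (4/π)·sin²(π(k+1)/4)/(k+1)`. -/
def acoeff (k : ℕ) : ℝ := (4 / π) * Real.sin (π * ((k : ℝ) + 1) / 4)^2 / ((k : ℝ) + 1)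

/-- `b_k = (4/π)·sin²(π(k−1)/4)/(k−1)`. -/
def bcoeff (k : ℕ) : ℝ := (4 / π) * Real.sin (π * ((k : ℝ) - 1) / 4)^2 / ((k : ℝ) - 1)

/-!
Applying `σ₃` swaps the two profiles `(1,1)ᵀ` and `(1,-1)ᵀ`, so `⟨σ₃u_k^+, u_1^±⟩` collapses by the
addition formula to `½ sin((k ± 1)π(t+1)/4)`, whose integral over `(-1,1)` is elementary. The bound
`a_k² ≤ (4/π)²/(k+1)²` then gives summability.
-/

lemma inner_sigma3_ukp_ukp_one (k : ℕ) (t : ℝ) :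
    ⟪sigma3 (ukp k t), ukp 1 t⟫ = (((1 / 2) * sin (((k : ℝ) + 1) * π * (t + 1) / 4) : ℝ) : ℂ) := by
  simp only [sigma3, ukp, vec2, PiLp.toLp_apply, PiLp.inner_apply, Fin.sum_univ_two,
    RCLike.inner_apply, Matrix.cons_val_zero, Matrix.cons_val_one, map_neg,
    Complex.conj_ofReal, Nat.cast_one, one_mul]
  push_cast
  rw [show ((k : ℂ) + 1) * π * (t + 1) / 4 = k * π * (t + 1) / 4 + π * (t + 1) / 4 by ring,
    Complex.sin_add]
  ring

lemma inner_sigma3_ukp_ukm_one (k : ℕ) (t : ℝ) :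
    ⟪sigma3 (ukp k t), ukm 1 t⟫ = (((1 / 2) * sin (((k : ℝ) - 1) * π * (t + 1) / 4) : ℝ) : ℂ) := by
  simp only [sigma3, ukp, ukm, vec2, PiLp.toLp_apply, PiLp.inner_apply, Fin.sum_univ_two,
    RCLike.inner_apply, Matrix.cons_val_zero, Matrix.cons_val_one, map_neg,
    Complex.conj_ofReal, Nat.cast_one, one_mul]
  push_cast
  rw [show ((k : ℂ) - 1) * π * (t + 1) / 4 = k * π * (t + 1) / 4 - π * (t + 1) / 4 by ring,
    Complex.sin_sub]
  ring

/-- At `α = 0` both sides vanish, the right one through `x / 0 = 0`. -/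
lemma integral_sin_mul_add_one (α : ℝ) :
    ∫ t in (-1 : ℝ)..1, sin (α * (t + 1)) = 2 * sin α ^ 2 / α := by
  rcases eq_or_ne α 0 with rfl | hα
  · simp
  simp_rw [mul_add, mul_one]
  rw [intervalIntegral.integral_comp_mul_add sin hα, integral_sin, smul_eq_mul,
    show α * -1 + α = 0 by ring, show α * 1 + α = 2 * α by ring, cos_zero, cos_two_mul,
    cos_sq']
  ring

lemma integral_half_sin (c : ℝ) :
    ∫ t in (-1 : ℝ)..1, (1 / 2) * sin (c * π * (t + 1) / 4) = 4 / π * sin (π * c / 4) ^ 2 / c := by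
  calc ∫ t in (-1 : ℝ)..1, (1 / 2) * sin (c * π * (t + 1) / 4)
      = (1 / 2) * ∫ t in (-1 : ℝ)..1, sin (π * c / 4 * (t + 1)) := by
        rw [← intervalIntegral.integral_const_mul]
        ring_nf
    _ = 4 / π * sin (π * c / 4) ^ 2 / c := by
        rw [integral_sin_mul_add_one]
        rcases eq_or_ne c 0 with rfl | hc
        · simp
        field_simp

lemma acoeff_sq_le (k : ℕ) : acoeff k ^ 2 ≤ (4 / π) ^ 2 * (1 / ((k : ℝ) + 1) ^ 2) := by
  have hsin : (sin (π * ((k : ℝ) + 1) / 4) ^ 2) ^ 2 ≤ 1 :=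
    pow_le_one₀ (sq_nonneg _) (sin_sq_le_one _)
  calc acoeff k ^ 2
      = (4 / π) ^ 2 * ((sin (π * ((k : ℝ) + 1) / 4) ^ 2) ^ 2 / ((k : ℝ) + 1) ^ 2) := by
        rw [acoeff, div_pow, mul_pow, mul_div_assoc]
    _ ≤ (4 / π) ^ 2 * (1 / ((k : ℝ) + 1) ^ 2) := by gcongr

lemma summable_one_div_nat_add_one_sq : Summable (fun k : ℕ => 1 / ((k : ℝ) + 1) ^ 2) := by
  have := (summable_nat_add_iff 1).mpr (summable_one_div_nat_pow.mpr one_lt_two)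
  simpa only [Nat.cast_add, Nat.cast_one] using this

/-- For `k ≥ 2`:
`∫_{−1}^1 ⟨σ₃u_k^+(t), u₁^+(t)⟩ dt = a_k` and
`∫_{−1}^1 ⟨σ₃u_k^+(t), u₁^−(t)⟩ dt = b_k`, and `Σ_{k} a_k² < ∞`. -/
theorem offdiagonal_matrix_elements :
    (∀ k : ℕ, 2 ≤ k →
      (∫ t in (-1 : ℝ)..1, ⟪sigma3 (ukp k t), ukp 1 t⟫) = ((acoeff k : ℝ) : ℂ)) ∧
    (∀ k : ℕ, 2 ≤ k →
      (∫ t in (-1 : ℝ)..1, ⟪sigma3 (ukp k t), ukm 1 t⟫) = ((bcoeff k : ℝ) : ℂ)) ∧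
    Summable (fun k : ℕ => (acoeff k)^2) := by
  refine ⟨fun k _ => ?_, fun k _ => ?_, ?_⟩
  · simp only [inner_sigma3_ukp_ukp_one, intervalIntegral.integral_ofReal, integral_half_sin,
      acoeff]
  · simp only [inner_sigma3_ukp_ukm_one, intervalIntegral.integral_ofReal, integral_half_sin,
      bcoeff]
  · exact .of_nonneg_of_le (fun k => sq_nonneg _) acoeff_sq_le
      (summable_one_div_nat_add_one_sq.mul_left _)
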